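/- arXiv:1901.06880 — 3 statements merged into one kernel-verified Lean document; each statement's English description precedes it below -/
import Mathlib

section
/- Every extreme point of the polyhedron P^Q = {y ∈ ℝ^J : for every S ⊆ J, ∑_{i∈S} p_i y_i ≥ g_p(S)} satisfies positivity (y_j ≥ p_j for all j ∈ J) and non-overlapping (for all i ≠ j in J, y_j ≥ y_i + p_j or y_i ≥ y_j + p_i); that is, it encodes a feasible single-machine schedule by its completion times. -/
/-- `g_p(S) = ½(∑_{j∈S} p_j)² + ½ ∑_{j∈S} p_j²`. -/
noncomputable def gp {J : Type*} (p : J → ℝ) (S : Finset J) : ℝ :=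
  (∑ j ∈ S, p j) ^ 2 / 2 + (∑ j ∈ S, (p j) ^ 2) / 2

/-- The polyhedron `P^Q = {y ∈ ℝ^J : ∀ S ⊆ J, ∑_{i∈S} p_i y_i ≥ g_p(S)}`. -/
def PQ {J : Type*} [Fintype J] (p : J → ℝ) : Set (J → ℝ) :=
  {y | ∀ S : Finset J, ∑ i ∈ S, p i * y i ≥ gp p S}

/-
For a tight set `S` (one whose constraint holds with equality) comparing with the constraints of
`S \ {a}` and `S ∪ {a}` gives `y_a ≤ p(S)` for `a ∈ S` and `y_a ≥ p(S) + p_a` for `a ∉ S`; so a tight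
set containing exactly one of two jobs `i, j` forces them apart. If `i, j` overlap, every set
separating them therefore has positive slack, and moving `y` by `±ε (e_i / p_i - e_j / p_j)` for
small `ε > 0` stays in `P^Q`, since this changes `∑_{k∈S} p_k y_k` only on separating sets, and
by `±ε`. Then `y` is the midpoint of two distinct points of `P^Q`.
-/

open Finset

theorem Set.Finite.exists_pos_le_of_forall_pos {α : Type*} {s : Set α} (hs : s.Finite)
    {f : α → ℝ} (hf : ∀ x ∈ s, 0 < f x) : ∃ ε > 0, ∀ x ∈ s, ε ≤ f x := by
  rcases s.eq_empty_or_nonempty with rfl | hne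
  · exact ⟨1, one_pos, by simp⟩
  · obtain ⟨x₀, hx₀, hmin⟩ := Set.exists_min_image s f hs hne
    exact ⟨f x₀, hf x₀ hx₀, hmin⟩

lemma gp_insert {J : Type*} [DecidableEq J] (p : J → ℝ) {S : Finset J} {j : J} (hj : j ∉ S) :
    gp p (insert j S) = gp p S + p j * ∑ k ∈ S, p k + p j ^ 2 := by
  simp only [gp, sum_insert hj]
  ring

noncomputable def slack {J : Type*} (p y : J → ℝ) (S : Finset J) : ℝ :=
  ∑ k ∈ S, p k * y k - gp p S

section Tight

variable {J : Type*} [Fintype J] {p y : J → ℝ}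

lemma slack_nonneg (hy : y ∈ PQ p) (S : Finset J) : 0 ≤ slack p y S :=
  sub_nonneg.2 (hy S)

lemma le_of_mem_PQ (hp : ∀ j, 0 < p j) (hy : y ∈ PQ p) (j : J) : p j ≤ y j := by
  have h := hy {j}
  simp only [gp, sum_singleton] at h
  nlinarith [hp j]

variable [DecidableEq J]

lemma le_sum_of_slack_eq_zero (hp : ∀ j, 0 < p j) (hy : y ∈ PQ p) {S : Finset J}
    (hS : slack p y S = 0) {a : J} (ha : a ∈ S) : y a ≤ ∑ k ∈ S, p k := by
  have hrest := hy (S.erase a)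
  rw [← insert_erase ha] at hS ⊢
  rw [slack, sum_insert (notMem_erase a S), gp_insert p (notMem_erase a S)] at hS
  rw [sum_insert (notMem_erase a S)]
  nlinarith [hp a]

lemma sum_add_le_of_slack_eq_zero (hp : ∀ j, 0 < p j) (hy : y ∈ PQ p) {S : Finset J}
    (hS : slack p y S = 0) {a : J} (ha : a ∉ S) : ∑ k ∈ S, p k + p a ≤ y a := by
  have hins := hy (insert a S)
  rw [sum_insert ha, gp_insert p ha] at hins
  rw [slack] at hS
  nlinarith [hp a]

lemma mem_iff_mem_of_slack_eq_zero (hp : ∀ j, 0 < p j) (hy : y ∈ PQ p) {i j : J}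
    (hji : y j < y i + p j) (hij : y i < y j + p i) {S : Finset J} (hS : slack p y S = 0) :
    i ∈ S ↔ j ∈ S := by
  constructor
  · intro hi
    by_contra hj
    linarith [sum_add_le_of_slack_eq_zero hp hy hS hj, le_sum_of_slack_eq_zero hp hy hS hi]
  · intro hj
    by_contra hi
    linarith [sum_add_le_of_slack_eq_zero hp hy hS hi, le_sum_of_slack_eq_zero hp hy hS hj]

end Tight

section Transfer

variable {J : Type*} [DecidableEq J]

noncomputable def transfer (p : J → ℝ) (i j : J) : J → ℝ :=
  Pi.single i (p i)⁻¹ - Pi.single j (p j)⁻¹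

lemma sum_mul_transfer {p : J → ℝ} (hp : ∀ j, 0 < p j) (i j : J) (S : Finset J) :
    ∑ k ∈ S, p k * transfer p i j k = (if i ∈ S then 1 else 0) - (if j ∈ S then 1 else 0) := by
  have hsingle : ∀ l : J,
      ∑ k ∈ S, p k * (Pi.single l (p l)⁻¹ : J → ℝ) k = if l ∈ S then 1 else 0 := by
    intro l
    simp_rw [Pi.single_apply, mul_ite, mul_zero]
    simp [sum_ite_eq', (hp l).ne']
  simp only [transfer, Pi.sub_apply, mul_sub, sum_sub_distrib, hsingle]

variable [Fintype J] {p y : J → ℝ}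

lemma add_smul_transfer_mem_PQ (hp : ∀ j, 0 < p j) (hy : y ∈ PQ p) {i j : J} {t : ℝ}
    (ht : ∀ S : Finset J, ¬(i ∈ S ↔ j ∈ S) → |t| ≤ slack p y S) :
    y + t • transfer p i j ∈ PQ p := by
  intro S
  have hsum : ∑ k ∈ S, p k * (y + t • transfer p i j) k
      = ∑ k ∈ S, p k * y k + t * ∑ k ∈ S, p k * transfer p i j k := by
    rw [mul_sum, ← sum_add_distrib]
    exact sum_congr rfl fun k _ => by simp only [Pi.add_apply, Pi.smul_apply, smul_eq_mul]; ring
  have hS := hy S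
  rw [ge_iff_le, hsum, sum_mul_transfer hp]
  have hsep : ¬(i ∈ S ↔ j ∈ S) → -t ≤ slack p y S ∧ t ≤ slack p y S := fun h =>
    ⟨(neg_le_abs t).trans (ht S h), (le_abs_self t).trans (ht S h)⟩
  rw [slack] at hsep
  by_cases hi : i ∈ S <;> by_cases hj : j ∈ S <;> simp only [hi, hj, if_true, if_false] at hsep ⊢
  · linarith
  · linarith [hsep (by simp)]
  · linarith [hsep (by simp)]
  · linarith

end Transfer

/-- Every extreme point of `P^Q` (a point of `P^Q` which is not the
midpoint of two distinct points of `P^Q`) satisfies positivity and non-overlapping,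
i.e. it encodes a feasible single-machine schedule by its completion times. -/
theorem stmt_4 {J : Type*} [Fintype J] (p : J → ℝ) (hp : ∀ j, 0 < p j)
    (y : J → ℝ) (hy : y ∈ PQ p)
    (hext : ∀ y₁ ∈ PQ p, ∀ y₂ ∈ PQ p, (∀ k, y k = (y₁ k + y₂ k) / 2) → y₁ = y₂) :
    (∀ j, p j ≤ y j) ∧
      (∀ i j : J, i ≠ j → y j ≥ y i + p j ∨ y i ≥ y j + p i) := by
  classical
  refine ⟨le_of_mem_PQ hp hy, fun i j hij => ?_⟩
  by_contra! hoverlap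
  have hsep : ∀ S ∈ {S : Finset J | ¬(i ∈ S ↔ j ∈ S)}, 0 < slack p y S := fun S hS =>
    (slack_nonneg hy S).lt_of_ne fun h0 =>
      hS (mem_iff_mem_of_slack_eq_zero hp hy hoverlap.1 hoverlap.2 h0.symm)
  obtain ⟨ε, hε, hle⟩ := (Set.toFinite _).exists_pos_le_of_forall_pos hsep
  have hmem : ∀ t, |t| = ε → y + t • transfer p i j ∈ PQ p := fun t ht =>
    add_smul_transfer_mem_PQ hp hy fun S hS => ht ▸ hle S hS
  have heq := congrFun (hext _ (hmem ε (abs_of_pos hε)) _ (hmem (-ε) (by simp [hε.le]))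
    fun k => by simp only [Pi.add_apply, Pi.smul_apply, smul_eq_mul]; ring) i
  simp only [transfer, Pi.add_apply, Pi.smul_apply, Pi.sub_apply, Pi.single_eq_same,
    Pi.single_eq_of_ne hij, smul_eq_mul, sub_zero, add_right_inj] at heq
  have := inv_pos.2 (hp i)
  nlinarith
end

section
/- Let C ∈ ℝ^J be a feasible schedule without straddling task (i.e. no j satisfies C_j − p_j < d < C_j) such that all tasks are processed between d − p(J) and d + p(J), i.e. d − p(J) ≤ C_j − p_j and C_j ≤ d + p(J) for all j. Then there exist δ ∈ {0,1}^J and x ∈ ℝ^{J^<} such that, setting e_j = [d − C_j]^+ and t_j = [C_j − d]^+ for all j, the tuple (e, t, δ, x) belongs to the polyhedron P¹. -/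
/-- Sum over the ordered pairs `S^< = {(i,j) ∈ S² : i < j}`. -/
def pairSum {J : Type*} [LinearOrder J] (S : Finset J) (f : J → J → ℝ) : ℝ :=
  ∑ i ∈ S, ∑ j ∈ S.filter (fun j => i < j), f i j

/-- Membership in the polyhedron `P¹`: the constraints (e0–t1) on `e,t`,
`δ ∈ [0,1]^J`, the linearization constraints (x1–x4), and the non-overlapping
inequalities (S1) and (S2). -/
def memP1 {J : Type*} [Fintype J] [LinearOrder J]
    (p : J → ℝ) (e t δ : J → ℝ) (x : J → J → ℝ) : Prop :=
  (∀ j, 0 ≤ δ j ∧ δ j ≤ 1) ∧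
  (∀ j, 0 ≤ e j) ∧ (∀ j, e j ≤ δ j * ((∑ k, p k) - p j)) ∧
  (∀ j, 0 ≤ t j) ∧ (∀ j, t j ≤ (1 - δ j) * (∑ k, p k)) ∧
  (∀ i j : J, i < j →
    x i j ≥ δ i - δ j ∧ x i j ≥ δ j - δ i ∧
    x i j ≤ δ i + δ j ∧ x i j ≤ 2 - (δ i + δ j)) ∧
  (∀ S : Finset J,
    ∑ i ∈ S, p i * e i ≥ pairSum S (fun i j => p i * p j * (δ i + δ j - x i j) / 2)) ∧
  (∀ S : Finset J,
    ∑ i ∈ S, p i * t i ≥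
      pairSum S (fun i j => p i * p j * (2 - (δ i + δ j) - x i j) / 2)
        + ∑ i ∈ S, (p i) ^ 2 * (1 - δ i))

lemma pairSum_congr' {J : Type*} [LinearOrder J] (S : Finset J) (f g : J → J → ℝ)
    (h : ∀ i j, f i j = g i j) : pairSum S f = pairSum S g := by
  unfold pairSum
  exact Finset.sum_congr rfl fun i _ => Finset.sum_congr rfl fun j _ => h i j

lemma pairSum_sq' {J : Type*} [LinearOrder J] (S : Finset J) (q : J → ℝ) :
    pairSum S (fun i j => q i * q j) = ((∑ i ∈ S, q i) ^ 2 - ∑ i ∈ S, q i ^ 2) / 2 := by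
  have key : (∑ i ∈ S, q i) ^ 2 =
      2 * pairSum S (fun i j => q i * q j) + ∑ i ∈ S, q i ^ 2 := by
    rw [sq, Finset.sum_mul_sum]
    unfold pairSum
    have expand : ∀ i ∈ S, ∑ j ∈ S, q i * q j =
        (∑ j ∈ S, if i < j then q i * q j else 0)
        + (∑ j ∈ S, if j < i then q i * q j else 0) + q i ^ 2 := by
      intro i hi
      rw [← Finset.sum_add_distrib]
      have : q i ^ 2 = ∑ j ∈ S, if j = i then q i ^ 2 else 0 := by
        rw [Finset.sum_ite_eq' S i (fun _ => q i ^ 2)]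
        simp [hi]
      rw [this, ← Finset.sum_add_distrib]
      refine Finset.sum_congr rfl fun j _ => ?_
      rcases lt_trichotomy i j with h | h | h
      · rw [if_pos h, if_neg (asymm h), if_neg (ne_of_gt h)]; ring
      · subst h; simp [sq]
      · rw [if_neg (asymm h), if_pos h, if_neg (ne_of_lt h)]; ring
    rw [Finset.sum_congr rfl expand]
    rw [Finset.sum_add_distrib, Finset.sum_add_distrib]
    have hswap : (∑ i ∈ S, ∑ j ∈ S, if j < i then q i * q j else 0)
        = ∑ i ∈ S, ∑ j ∈ S.filter (fun j => i < j), q i * q j := by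
      rw [Finset.sum_comm]
      refine Finset.sum_congr rfl fun i _ => ?_
      rw [Finset.sum_filter]
      refine Finset.sum_congr rfl fun j _ => ?_
      split_ifs <;> ring
    rw [hswap]
    have : (∑ i ∈ S, ∑ j ∈ S, if i < j then q i * q j else 0)
        = ∑ i ∈ S, ∑ j ∈ S.filter (fun j => i < j), q i * q j := by
      refine Finset.sum_congr rfl fun i _ => ?_
      rw [Finset.sum_filter]
    rw [this]; ring
  linarith

/-- Non-overlapping tasks all executed inside `[a,b]` have total length `≤ b - a`. -/
lemma packing' {J : Type*} [LinearOrder J] (p C : J → ℝ) (hp : ∀ j, 0 < p j)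
    (hnov : ∀ i j : J, i ≠ j → C j ≥ C i + p j ∨ C i ≥ C j + p i) :
    ∀ S : Finset J, ∀ a b : ℝ, (∀ i ∈ S, a ≤ C i - p i) → (∀ i ∈ S, C i ≤ b) →
      S.Nonempty → ∑ i ∈ S, p i ≤ b - a := by
  intro S
  induction S using Finset.strongInduction with
  | _ S IH =>
    intro a b hA hB hne
    obtain ⟨j, hj, hjmin⟩ := S.exists_min_image C hne
    have herase : ∀ i ∈ S.erase j, C j ≤ C i - p i := by
      intro i hi
      have hij : i ≠ j := Finset.ne_of_mem_erase hi
      have hiS := Finset.mem_of_mem_erase hi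
      rcases hnov i j hij with h1 | h2
      · exfalso; have := hjmin i hiS; have := hp j; linarith
      · linarith
    rw [← Finset.sum_erase_add S p hj]
    have hpj : p j ≤ C j - a := by have := hA j hj; linarith
    have hjb := hB j hj
    rcases (S.erase j).eq_empty_or_nonempty with he | hne'
    · rw [he]; simp; linarith
    · have := IH (S.erase j) (Finset.erase_ssubset hj) (C j) b herase
        (fun i hi => hB i (Finset.mem_of_mem_erase hi)) hne'
      linarith

/-- The key inequality for early tasks. -/
lemma core' {J : Type*} [LinearOrder J] (p C : J → ℝ) (hp : ∀ j, 0 < p j)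
    (hnov : ∀ i j : J, i ≠ j → C j ≥ C i + p j ∨ C i ≥ C j + p i) (d : ℝ) :
    ∀ S : Finset J, (∀ i ∈ S, C i ≤ d) →
      ((∑ i ∈ S, p i) ^ 2 - ∑ i ∈ S, p i ^ 2) / 2 ≤ ∑ i ∈ S, p i * (d - C i) := by
  intro S
  induction S using Finset.strongInduction with
  | _ S IH =>
    intro hSd
    rcases S.eq_empty_or_nonempty with rfl | hne
    · simp
    obtain ⟨j, hj, hjmin⟩ := S.exists_min_image C hne
    have herase : ∀ i ∈ S.erase j, C j ≤ C i - p i := by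
      intro i hi
      have hij : i ≠ j := Finset.ne_of_mem_erase hi
      have hiS := Finset.mem_of_mem_erase hi
      rcases hnov i j hij with h1 | h2
      · exfalso; have := hjmin i hiS; have := hp j; linarith
      · linarith
    have hAle : ∑ i ∈ S.erase j, p i ≤ d - C j := by
      rcases (S.erase j).eq_empty_or_nonempty with he | hne'
      · rw [he]; simp; exact hSd j hj
      · exact packing' p C hp hnov (S.erase j) (C j) d herase
          (fun i hi => hSd i (Finset.mem_of_mem_erase hi)) hne'
    have hIH := IH (S.erase j) (Finset.erase_ssubset hj)
      (fun i hi => hSd i (Finset.mem_of_mem_erase hi))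
    rw [← Finset.sum_erase_add S p hj, ← Finset.sum_erase_add S (fun i => p i ^ 2) hj,
      ← Finset.sum_erase_add S (fun i => p i * (d - C i)) hj]
    have hprod : p j * (∑ i ∈ S.erase j, p i) ≤ p j * (d - C j) :=
      mul_le_mul_of_nonneg_left hAle (le_of_lt (hp j))
    nlinarith [hIH]

/-- a feasible schedule without straddling task whose tasks are all
processed between `d − p(J)` and `d + p(J)` is encoded (via its earliness/tardiness
vector) by an integer point of `P¹`. -/
theorem stmt_13 {J : Type*} [Fintype J] [LinearOrder J]
    (p : J → ℝ) (hp : ∀ j, 0 < p j) (d : ℝ)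
    (C : J → ℝ)
    (hpos : ∀ j, p j ≤ C j)
    (hnov : ∀ i j : J, i ≠ j → C j ≥ C i + p j ∨ C i ≥ C j + p i)
    (hnostraddle : ∀ j, ¬(C j - p j < d ∧ d < C j))
    (hlb : ∀ j, d - (∑ k, p k) ≤ C j - p j)
    (hub : ∀ j, C j ≤ d + (∑ k, p k)) :
    ∃ (δ : J → ℝ) (x : J → J → ℝ), (∀ j, δ j = 0 ∨ δ j = 1) ∧
      memP1 p (fun j => max (d - C j) 0) (fun j => max (C j - d) 0) δ x := by
  classical
  set P := ∑ k, p k with hP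
  set δ : J → ℝ := fun j => if C j ≤ d then 1 else 0 with hδdef
  set x : J → J → ℝ := fun i j => |δ i - δ j| with hxdef
  have hδ01 : ∀ j, δ j = 0 ∨ δ j = 1 := by
    intro j; by_cases h : C j ≤ d <;> simp [hδdef, h]
  have hE : ∀ j, C j ≤ d → δ j = 1 := by intro j h; simp [hδdef, h]
  have hT : ∀ j, ¬ C j ≤ d → δ j = 0 := by intro j h; simp [hδdef, h]
  have hTd : ∀ j, ¬ C j ≤ d → d + p j ≤ C j := by
    intro j h
    rw [not_le] at h
    by_contra hcon
    exact hnostraddle j ⟨by linarith, h⟩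
  have hpP : ∀ j, p j ≤ P :=
    fun j => Finset.single_le_sum (fun i _ => (hp i).le) (Finset.mem_univ j)
  refine ⟨δ, x, hδ01, ?_, ?_, ?_, ?_, ?_, ?_, ?_, ?_⟩
  · intro j; rcases hδ01 j with h | h <;> rw [h] <;> norm_num
  · intro j; exact le_max_right _ _
  · intro j
    by_cases h : C j ≤ d
    · rw [hE j h, one_mul]
      exact max_le (by linarith [hlb j]) (by linarith [hpP j, hpos j, hp j, hlb j])
    · rw [hT j h, zero_mul]
      exact max_le (by linarith [hTd j h, hp j]) le_rfl
  · intro j; exact le_max_right _ _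
  · intro j
    by_cases h : C j ≤ d
    · have h0 : (1 - δ j) * P = 0 := by rw [hE j h]; ring
      rw [h0]
      exact max_le (by linarith) le_rfl
    · have h0 : (1 - δ j) * P = P := by rw [hT j h]; ring
      rw [h0]
      exact max_le (by linarith [hub j]) (le_trans (hp j).le (hpP j))
  · intro i j _
    rcases hδ01 i with hi | hi <;> rcases hδ01 j with hj | hj <;>
      simp [hxdef, hi, hj] <;> norm_num
  · -- (S1)
    intro S
    have hq : ∀ i j, p i * p j * (δ i + δ j - x i j) / 2 = (p i * δ i) * (p j * δ j) := by
      intro i j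
      rcases hδ01 i with hi | hi <;> rcases hδ01 j with hj | hj <;>
        simp only [hxdef] <;> rw [hi, hj] <;> norm_num
    rw [ge_iff_le, pairSum_congr' S _ _ hq, pairSum_sq']
    set E := S.filter (fun i => C i ≤ d) with hEdef
    have hqs : ∑ i ∈ S, p i * δ i = ∑ i ∈ E, p i := by
      rw [hEdef, Finset.sum_filter]
      refine Finset.sum_congr rfl fun i _ => ?_
      by_cases h : C i ≤ d
      · rw [if_pos h, hE i h, mul_one]
      · rw [if_neg h, hT i h, mul_zero]
    have hqs2 : ∑ i ∈ S, (p i * δ i) ^ 2 = ∑ i ∈ E, p i ^ 2 := by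
      rw [hEdef, Finset.sum_filter]
      refine Finset.sum_congr rfl fun i _ => ?_
      by_cases h : C i ≤ d
      · rw [if_pos h, hE i h, mul_one]
      · rw [if_neg h, hT i h, mul_zero]; ring
    rw [hqs, hqs2]
    have hcore := core' p C hp hnov d E (fun i hi => (Finset.mem_filter.mp hi).2)
    have hle : ∑ i ∈ E, p i * (d - C i) ≤ ∑ i ∈ S, p i * max (d - C i) 0 := by
      have h1 : ∑ i ∈ E, p i * (d - C i) = ∑ i ∈ E, p i * max (d - C i) 0 := by
        refine Finset.sum_congr rfl fun i hi => ?_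
        have : C i ≤ d := (Finset.mem_filter.mp hi).2
        rw [max_eq_left (by linarith)]
      rw [h1]
      exact Finset.sum_le_sum_of_subset_of_nonneg (Finset.filter_subset _ _)
        (fun i _ _ => mul_nonneg (hp i).le (le_max_right _ _))
    calc ((∑ i ∈ E, p i) ^ 2 - ∑ i ∈ E, p i ^ 2) / 2
        ≤ ∑ i ∈ E, p i * (d - C i) := hcore
      _ ≤ ∑ i ∈ S, p i * max (d - C i) 0 := hle
  · -- (S2)
    intro S
    have hq : ∀ i j, p i * p j * (2 - (δ i + δ j) - x i j) / 2
        = (p i * (1 - δ i)) * (p j * (1 - δ j)) := by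
      intro i j
      rcases hδ01 i with hi | hi <;> rcases hδ01 j with hj | hj <;>
        simp only [hxdef] <;> rw [hi, hj] <;> norm_num
    rw [ge_iff_le, pairSum_congr' S _ _ hq, pairSum_sq']
    set T := S.filter (fun i => ¬ C i ≤ d) with hTdef
    have hqs : ∑ i ∈ S, p i * (1 - δ i) = ∑ i ∈ T, p i := by
      rw [hTdef, Finset.sum_filter]
      refine Finset.sum_congr rfl fun i _ => ?_
      by_cases h : C i ≤ d
      · rw [if_neg (not_not_intro h), hE i h]; ring
      · rw [if_pos h, hT i h]; ring
    have hqs2 : ∑ i ∈ S, (p i * (1 - δ i)) ^ 2 = ∑ i ∈ T, p i ^ 2 := by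
      rw [hTdef, Finset.sum_filter]
      refine Finset.sum_congr rfl fun i _ => ?_
      by_cases h : C i ≤ d
      · rw [if_neg (not_not_intro h), hE i h]; ring
      · rw [if_pos h, hT i h]; ring
    have hqs3 : ∑ i ∈ S, p i ^ 2 * (1 - δ i) = ∑ i ∈ T, p i ^ 2 := by
      rw [hTdef, Finset.sum_filter]
      refine Finset.sum_congr rfl fun i _ => ?_
      by_cases h : C i ≤ d
      · rw [if_neg (not_not_intro h), hE i h]; ring
      · rw [if_pos h, hT i h]; ring
    rw [hqs, hqs2, hqs3]
    -- mirrored schedule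
    set C2 : J → ℝ := fun i => p i - C i with hC2def
    have hnov2 : ∀ i j : J, i ≠ j → C2 j ≥ C2 i + p j ∨ C2 i ≥ C2 j + p i := by
      intro i j hij
      rcases hnov i j hij with h1 | h2
      · right; simp only [hC2def]; linarith
      · left; simp only [hC2def]; linarith
    have hcore := core' p C2 hp hnov2 (-d) T (by
      intro i hi
      have h := (Finset.mem_filter.mp hi).2
      have := hTd i h
      simp only [hC2def]
      linarith)
    have hsplit : ∑ i ∈ T, p i * (-d - C2 i)
        = (∑ i ∈ T, p i * (C i - d)) - ∑ i ∈ T, p i ^ 2 := by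
      rw [← Finset.sum_sub_distrib]
      refine Finset.sum_congr rfl fun i _ => ?_
      simp only [hC2def]; ring
    have hle : ∑ i ∈ T, p i * (C i - d) ≤ ∑ i ∈ S, p i * max (C i - d) 0 := by
      have h1 : ∑ i ∈ T, p i * (C i - d) = ∑ i ∈ T, p i * max (C i - d) 0 := by
        refine Finset.sum_congr rfl fun i hi => ?_
        have h := (Finset.mem_filter.mp hi).2
        have := hTd i h
        rw [max_eq_left (by linarith [hp i])]
      rw [h1]
      exact Finset.sum_le_sum_of_subset_of_nonneg (Finset.filter_subset _ _)
        (fun i _ _ => mul_nonneg (hp i).le (le_max_right _ _))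
    rw [hsplit] at hcore
    linarith
end

section
/- Let δ ∈ {0,1}^J, t' ∈ ℝ^J, x ∈ [0,1]^{J^<} and γ ∈ [0,1]^J. (i) [γ ∈ {0,1}^J, ∑_{j∈J} γ_j = 1, and δ_j ≤ 1 − γ_j for all j] holds if and only if there exists i₀ ∈ T(δ) with γ = 1_{i₀} (the indicator vector of {i₀}). (ii) If (i) holds and moreover δ, x satisfy the inequalities (x1–x4), t'_j ≤ p_j + (1 − γ_j)(p(J) − p_j) for all j ∈ J, and (t', δ, x) satisfies (S2): for every S ⊆ J, ∑_{i∈S} p_i t'_i ≥ ∑_{(i,j)∈S^<} p_i p_j (2 − (δ_i + δ_j) − x_{i,j})/2 + ∑_{i∈S} p_i² (1 − δ_i), then t'_{i₀} = p_{i₀} and for every j ∈ T(δ) with j ≠ i₀, t'_j ≥ t'_{i₀} + p_j. -/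
lemma pairSum_singleton {J : Type*} [LinearOrder J] (a : J) (f : J → J → ℝ) :
    pairSum {a} f = 0 := by
  simp only [pairSum, Finset.sum_singleton]
  rw [Finset.filter_singleton]
  simp

lemma pairSum_pair {J : Type*} [LinearOrder J] [DecidableEq J] (a b : J) (h : a < b)
    (f : J → J → ℝ) : pairSum {a, b} f = f a b := by
  unfold pairSum
  rw [Finset.sum_pair h.ne]
  have h1 : ({a, b} : Finset J).filter (fun j => a < j) = {b} := by
    ext y
    simp only [Finset.mem_filter, Finset.mem_insert, Finset.mem_singleton]
    constructor
    · rintro ⟨rfl | rfl, hy⟩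
      · exact absurd hy (lt_irrefl _)
      · rfl
    · rintro rfl; exact ⟨Or.inr rfl, h⟩
  have h2 : ({a, b} : Finset J).filter (fun j => b < j) = ∅ := by
    ext y
    simp only [Finset.mem_filter, Finset.mem_insert, Finset.mem_singleton,
      Finset.notMem_empty, iff_false, not_and]
    rintro (rfl | rfl)
    · exact asymm h
    · exact lt_irrefl _
  rw [h1, h2]
  simp

/-- (i) `γ` is boolean with `∑ γ_j = 1` and `δ_j ≤ 1 − γ_j` for all `j`
iff `γ` is the indicator vector of some `i₀ ∈ T(δ)`; (ii) in that case, if moreover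
`(δ,x)` satisfies (x1–x4), `t'_j ≤ p_j + (1−γ_j)(p(J)−p_j)` for all `j`, and
`(t',δ,x)` satisfies (S2), then `t'_{i₀} = p_{i₀}` and every other `j ∈ T(δ)` has
`t'_j ≥ t'_{i₀} + p_j`. -/
theorem stmt_17 {J : Type*} [Fintype J] [LinearOrder J] [DecidableEq J]
    (p : J → ℝ) (hp : ∀ j, 0 < p j)
    (δ t' : J → ℝ) (x : J → J → ℝ) (γ : J → ℝ)
    (hδ : ∀ j, δ j = 0 ∨ δ j = 1)
    (hx01 : ∀ i j : J, i < j → 0 ≤ x i j ∧ x i j ≤ 1)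
    (hγ01 : ∀ j, 0 ≤ γ j ∧ γ j ≤ 1) :
    (((∀ j, γ j = 0 ∨ γ j = 1) ∧ (∑ j, γ j) = 1 ∧ (∀ j, δ j ≤ 1 - γ j)) ↔
      (∃ i₀ : J, δ i₀ = 0 ∧ γ = fun j => if j = i₀ then 1 else 0)) ∧
    (∀ i₀ : J, δ i₀ = 0 → (γ = fun j => if j = i₀ then 1 else 0) →
      (∀ i j : J, i < j →
        x i j ≥ δ i - δ j ∧ x i j ≥ δ j - δ i ∧
        x i j ≤ δ i + δ j ∧ x i j ≤ 2 - (δ i + δ j)) →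
      (∀ j, t' j ≤ p j + (1 - γ j) * ((∑ k, p k) - p j)) →
      (∀ S : Finset J,
        ∑ i ∈ S, p i * t' i ≥
          pairSum S (fun i j => p i * p j * (2 - (δ i + δ j) - x i j) / 2)
            + ∑ i ∈ S, (p i) ^ 2 * (1 - δ i)) →
      t' i₀ = p i₀ ∧ ∀ j, δ j = 0 → j ≠ i₀ → t' j ≥ t' i₀ + p j) := by
  constructor
  · constructor
    · rintro ⟨hb, hsum, hle⟩
      have hne : ∃ i₀ : J, γ i₀ = 1 := by
        by_contra h
        push_neg at h
        have : ∀ j ∈ Finset.univ, γ j = 0 := by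
          intro j _
          rcases hb j with h0 | h1
          · exact h0
          · exact absurd h1 (h j)
        rw [Finset.sum_eq_zero this] at hsum
        norm_num at hsum
      obtain ⟨i₀, hi₀⟩ := hne
      have hzero : ∀ j, j ≠ i₀ → γ j = 0 := by
        intro j hj
        have hs : ∑ k ∈ Finset.univ.erase i₀, γ k = 0 := by
          have := Finset.add_sum_erase Finset.univ γ (Finset.mem_univ i₀)
          rw [hsum] at this
          linarith [this, hi₀]
        have := (Finset.sum_eq_zero_iff_of_nonneg (fun k _ => (hγ01 k).1)).mp hs j
          (Finset.mem_erase.mpr ⟨hj, Finset.mem_univ j⟩)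
        exact this
      refine ⟨i₀, ?_, ?_⟩
      · have := hle i₀
        rw [hi₀] at this
        rcases hδ i₀ with h0 | h1
        · exact h0
        · linarith [h1 ▸ this]
      · funext j
        by_cases hj : j = i₀
        · simp [hj, hi₀]
        · simp [hj, hzero j hj]
    · rintro ⟨i₀, hδ0, rfl⟩
      refine ⟨fun j => ?_, ?_, fun j => ?_⟩
      · by_cases hj : j = i₀ <;> simp [hj]
      · simp
      · by_cases hj : j = i₀
        · simp [hj, hδ0]
        · simp only [hj, if_false]
          rcases hδ j with h0 | h1 <;> linarith
  · intro i₀ hδ0 hγ hx ht hS2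
    subst hγ
    have ht0 : t' i₀ ≤ p i₀ := by
      have := ht i₀
      simp at this
      exact this
    have hS1 := hS2 {i₀}
    rw [pairSum_singleton] at hS1
    simp [hδ0] at hS1
    have hti0 : t' i₀ = p i₀ := by
      nlinarith [hp i₀]
    have key : ∀ a b : J, a < b → δ a = 0 → δ b = 0 →
        p a * t' a + p b * t' b ≥ p a * p b + p a ^ 2 + p b ^ 2 := by
      intro a b hab ha hb
      have hx0 : x a b = 0 := by
        have h3 := (hx a b hab).2.2.1
        have h0 := (hx01 a b hab).1
        rw [ha, hb] at h3
        linarith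
      have := hS2 {a, b}
      rw [pairSum_pair a b hab, Finset.sum_pair hab.ne, Finset.sum_pair hab.ne] at this
      rw [ha, hb, hx0] at this
      nlinarith [this]
    refine ⟨hti0, fun j hδj hne => ?_⟩
    rcases hne.lt_or_gt with h | h
    · have := key j i₀ h hδj hδ0
      nlinarith [hp j, hp i₀]
    · have := key i₀ j h hδ0 hδj
      nlinarith [hp j, hp i₀]
end
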